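/- Let a₁, a₂, a₃, a₄, a₅ ∈ ℂ be all nonzero and α, β, γ ∈ ℂ. If all nine quadrics Q₀, Q₁, Q₂, Q₀′, Q₁′, Q₂′, Q₀″, Q₁″, Q₂″ vanish at the point (x₀,…,x₅) = (0, a₁, a₂, a₃, a₄, a₅), then a₂a₄ + a₅a₁ ≠ 0, a₂a₄ − a₅a₁ ≠ 0, and the constants are given by α = −a₃²/(a₂a₄ + a₅a₁), β = a₃²/(a₂a₄ − a₅a₁), γ = −a₃a₄/(a₂a₅). -/

import Mathlib

/-!
On the hyperplane `x₀ = 0` the quadrics `Q₀`, `Q₀′`, `Q₀″` are affine in their constant, with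
constant terms `a₃²`, `-a₃²`, `a₃a₄`, all nonzero. An equation `c + t s = 0` with `c ≠ 0` forces
`s ≠ 0` and determines `t = -c / s`.
-/

open MvPolynomial

noncomputable section

abbrev R6 : Type := MvPolynomial (Fin 6) ℂ

def Q0 (α : ℂ) : R6 := X 0 ^ 2 + X 3 ^ 2 + C α * (X 2 * X 4 + X 5 * X 1)
def Q1 (α : ℂ) : R6 := X 1 ^ 2 + X 4 ^ 2 + C α * (X 3 * X 5 + X 0 * X 2)
def Q2 (α : ℂ) : R6 := X 2 ^ 2 + X 5 ^ 2 + C α * (X 4 * X 0 + X 1 * X 3)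
def Q0' (β : ℂ) : R6 := X 0 ^ 2 - X 3 ^ 2 + C β * (X 2 * X 4 - X 5 * X 1)
def Q1' (β : ℂ) : R6 := X 1 ^ 2 - X 4 ^ 2 + C β * (X 3 * X 5 - X 0 * X 2)
def Q2' (β : ℂ) : R6 := X 2 ^ 2 - X 5 ^ 2 + C β * (X 4 * X 0 - X 1 * X 3)
def Q0'' (γ : ℂ) : R6 := X 0 * X 1 + X 3 * X 4 + C γ * (X 2 * X 5)
def Q1'' (γ : ℂ) : R6 := X 1 * X 2 + X 4 * X 5 + C γ * (X 3 * X 0)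
def Q2'' (γ : ℂ) : R6 := X 2 * X 3 + X 5 * X 0 + C γ * (X 4 * X 1)

theorem ne_zero_and_eq_neg_div_of_add_mul_eq_zero {K : Type*} [Field K] {c s t : K}
    (hc : c ≠ 0) (h : c + t * s = 0) : s ≠ 0 ∧ t = -c / s := by
  have hs : s ≠ 0 := by
    rintro rfl
    exact hc (by simpa using h)
  exact ⟨hs, by rw [eq_div_iff hs]; linear_combination h⟩

section EvalOnHyperplane

variable (a₁ a₂ a₃ a₄ a₅ : ℂ)

theorem eval_Q0 (α : ℂ) :
    eval ![0, a₁, a₂, a₃, a₄, a₅] (Q0 α) = a₃ ^ 2 + α * (a₂ * a₄ + a₅ * a₁) := by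
  simp [Q0]

theorem eval_Q0' (β : ℂ) :
    eval ![0, a₁, a₂, a₃, a₄, a₅] (Q0' β) = -a₃ ^ 2 + β * (a₂ * a₄ - a₅ * a₁) := by
  simp [Q0']

theorem eval_Q0'' (γ : ℂ) :
    eval ![0, a₁, a₂, a₃, a₄, a₅] (Q0'' γ) = a₃ * a₄ + γ * (a₂ * a₅) := by
  simp [Q0'']

end EvalOnHyperplane

theorem values_of_constants_general (a₁ a₂ a₃ a₄ a₅ : ℂ)
    (h₃ : a₃ ≠ 0) (h₄ : a₄ ≠ 0)
    (α β γ : ℂ)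
    (hQ0 : eval ![0, a₁, a₂, a₃, a₄, a₅] (Q0 α) = 0)
    (hQ0' : eval ![0, a₁, a₂, a₃, a₄, a₅] (Q0' β) = 0)
    (hQ0'' : eval ![0, a₁, a₂, a₃, a₄, a₅] (Q0'' γ) = 0) :
    a₂ * a₄ + a₅ * a₁ ≠ 0 ∧ a₂ * a₄ - a₅ * a₁ ≠ 0 ∧
    α = -a₃ ^ 2 / (a₂ * a₄ + a₅ * a₁) ∧
    β = a₃ ^ 2 / (a₂ * a₄ - a₅ * a₁) ∧
    γ = -(a₃ * a₄) / (a₂ * a₅) := by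
  rw [eval_Q0] at hQ0
  rw [eval_Q0'] at hQ0'
  rw [eval_Q0''] at hQ0''
  have ha₃ : a₃ ^ 2 ≠ 0 := pow_ne_zero 2 h₃
  obtain ⟨hp, hα⟩ := ne_zero_and_eq_neg_div_of_add_mul_eq_zero ha₃ hQ0
  obtain ⟨hm, hβ⟩ := ne_zero_and_eq_neg_div_of_add_mul_eq_zero (neg_ne_zero.mpr ha₃) hQ0'
  obtain ⟨-, hγ⟩ := ne_zero_and_eq_neg_div_of_add_mul_eq_zero (mul_ne_zero h₃ h₄) hQ0''
  exact ⟨hp, hm, hα, by rwa [neg_neg] at hβ, hγ⟩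

/-- If the nine quadrics all vanish at `(0, a₁, a₂, a₃, a₄, a₅)` with all `aᵢ ≠ 0`, then
`a₂a₄ + a₅a₁ ≠ 0`, `a₂a₄ − a₅a₁ ≠ 0`, and `α = −a₃²/(a₂a₄+a₅a₁)`, `β = a₃²/(a₂a₄−a₅a₁)`, `γ = −a₃a₄/(a₂a₅)`. -/
theorem values_of_constants (a₁ a₂ a₃ a₄ a₅ : ℂ)
    (h₁ : a₁ ≠ 0) (h₂ : a₂ ≠ 0) (h₃ : a₃ ≠ 0) (h₄ : a₄ ≠ 0) (h₅ : a₅ ≠ 0)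
    (α β γ : ℂ)
    (hQ0 : eval ![0, a₁, a₂, a₃, a₄, a₅] (Q0 α) = 0)
    (hQ1 : eval ![0, a₁, a₂, a₃, a₄, a₅] (Q1 α) = 0)
    (hQ2 : eval ![0, a₁, a₂, a₃, a₄, a₅] (Q2 α) = 0)
    (hQ0' : eval ![0, a₁, a₂, a₃, a₄, a₅] (Q0' β) = 0)
    (hQ1' : eval ![0, a₁, a₂, a₃, a₄, a₅] (Q1' β) = 0)
    (hQ2' : eval ![0, a₁, a₂, a₃, a₄, a₅] (Q2' β) = 0)
    (hQ0'' : eval ![0, a₁, a₂, a₃, a₄, a₅] (Q0'' γ) = 0)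
    (hQ1'' : eval ![0, a₁, a₂, a₃, a₄, a₅] (Q1'' γ) = 0)
    (hQ2'' : eval ![0, a₁, a₂, a₃, a₄, a₅] (Q2'' γ) = 0) :
    a₂ * a₄ + a₅ * a₁ ≠ 0 ∧ a₂ * a₄ - a₅ * a₁ ≠ 0 ∧
    α = -a₃ ^ 2 / (a₂ * a₄ + a₅ * a₁) ∧
    β = a₃ ^ 2 / (a₂ * a₄ - a₅ * a₁) ∧
    γ = -(a₃ * a₄) / (a₂ * a₅) :=
  values_of_constants_general a₁ a₂ a₃ a₄ a₅ h₃ h₄ α β γ hQ0 hQ0' hQ0''
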